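/- Theorem 2 (censored observations): Consider the accelerated failure time model y_j = x_jᵀβ + ε_j, j = 1,…,n, with ε_j i.i.d. two-piece distributed with location 0, scale σ, baseline density f_δ, and parameterisation functions a(γ), b(γ), under the prior π(β,σ,δ,γ) ∝ σ^{−q} π(δ) π(γ). Let {1,…,n} = O ∪ C be a partition into n_o observed indices (with observed values y_j, j ∈ O) and n_c = n − n_o censored indices (with Borel censoring sets A_j ⊆ ℝ, j ∈ C), and define the censored-data likelihood L(β,σ,δ,γ) = ∏_{j∈O} g(y_j − x_jᵀβ | σ, a(γ), b(γ); f_δ) · ∏_{j∈C} ∫_{A_j} g(t − x_jᵀβ | σ, a(γ), b(γ); f_δ) dt. If the posterior based only on the uncensored observations is proper, i.e. ∫_Γ ∫_Δ ∫_0^∞ ∫_{ℝ^p} ∏_{j∈O} g(y_j − x_jᵀβ | σ, a(γ), b(γ); f_δ) · σ^{−q} π(δ) π(γ) dβ dσ dδ dγ < ∞, then the censored-data posterior is proper: ∫_Γ ∫_Δ ∫_0^∞ ∫_{ℝ^p} L(β,σ,δ,γ) · σ^{−q} π(δ) π(γ) dβ dσ dδ dγ < ∞. -/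

import Mathlib

open MeasureTheory

/-- Two-piece density with location 0, scale `σ`, baseline density `f`,
and parameterisation values `a`, `b`. -/
noncomputable def twoPiece (f : ℝ → ℝ) (σ a b : ℝ) (z : ℝ) : ℝ :=
  if z < 0 then 2 / (σ * (a + b)) * f (z / (σ * b))
  else 2 / (σ * (a + b)) * f (z / (σ * a))

lemma integral_Iic_eq_integral_Ioi_of_even {f : ℝ → ℝ} (heven : ∀ z, f (-z) = f z) :
    ∫ z in Set.Iic 0, f z = ∫ z in Set.Ioi 0, f z := by
  simpa [heven] using integral_comp_neg_Iic (0 : ℝ) f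

lemma integral_Ioi_eq_half_integral_of_even {f : ℝ → ℝ} (hfi : Integrable f)
    (heven : ∀ z, f (-z) = f z) :
    ∫ z in Set.Ioi 0, f z = (∫ z, f z) / 2 := by
  have hsplit := intervalIntegral.integral_Iic_add_Ioi (b := 0) hfi.integrableOn hfi.integrableOn
  linarith [integral_Iic_eq_integral_Ioi_of_even heven]

lemma integral_Iio_eq_half_integral_of_even {f : ℝ → ℝ} (hfi : Integrable f)
    (heven : ∀ z, f (-z) = f z) :
    ∫ z in Set.Iio 0, f z = (∫ z, f z) / 2 := by
  rw [← integral_Iic_eq_integral_Iio, integral_Iic_eq_integral_Ioi_of_even heven,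
    integral_Ioi_eq_half_integral_of_even hfi heven]

section TwoPiece

variable {f : ℝ → ℝ} {σ a b : ℝ}

lemma twoPiece_nonneg (hf : ∀ z, 0 ≤ f z) (hσ : 0 ≤ σ) (ha : 0 ≤ a) (hb : 0 ≤ b) (z : ℝ) :
    0 ≤ twoPiece f σ a b z := by
  unfold twoPiece
  split <;> exact mul_nonneg (by positivity) (hf _)

lemma twoPiece_eq_indicator_add (hσ : 0 < σ) (ha : 0 < a) (hb : 0 < b) (z : ℝ) :
    twoPiece f σ a b z =
      2 / (σ * (a + b)) * (Set.Iio 0).indicator f (z / (σ * b)) +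
        2 / (σ * (a + b)) * (Set.Ici 0).indicator f (z / (σ * a)) := by
  unfold twoPiece
  rcases lt_or_ge z 0 with hz | hz
  · simp [hz, div_neg_of_neg_of_pos hz (by positivity : 0 < σ * a),
      div_neg_of_neg_of_pos hz (by positivity : 0 < σ * b)]
  · simp [hz.not_gt, div_nonneg hz (by positivity : 0 ≤ σ * a),
      div_nonneg hz (by positivity : 0 ≤ σ * b)]

lemma integrable_twoPiece (hfi : Integrable f) (hσ : 0 < σ) (ha : 0 < a) (hb : 0 < b) :
    Integrable (twoPiece f σ a b) := by
  refine Integrable.congr ?_ (Filter.Eventually.of_forall fun z =>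
    (twoPiece_eq_indicator_add hσ ha hb z).symm)
  exact (((hfi.indicator measurableSet_Iio).comp_div (by positivity)).const_mul _).add
    (((hfi.indicator measurableSet_Ici).comp_div (by positivity)).const_mul _)

/-- The two halves of `f` are stretched by `σ b` and `σ a`, which the normalising constant
`2 / (σ (a + b))` exactly compensates. -/
lemma integral_twoPiece (hfi : Integrable f) (heven : ∀ z, f (-z) = f z)
    (hσ : 0 < σ) (ha : 0 < a) (hb : 0 < b) :
    ∫ z, twoPiece f σ a b z = ∫ z, f z := by
  have hleft : ∫ z, (Set.Iio 0).indicator f (z / (σ * b)) = σ * b * ((∫ z, f z) / 2) := by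
    rw [Measure.integral_comp_div, abs_of_pos (by positivity), smul_eq_mul,
      integral_indicator measurableSet_Iio, integral_Iio_eq_half_integral_of_even hfi heven]
  have hright : ∫ z, (Set.Ici 0).indicator f (z / (σ * a)) = σ * a * ((∫ z, f z) / 2) := by
    rw [Measure.integral_comp_div, abs_of_pos (by positivity), smul_eq_mul,
      integral_indicator measurableSet_Ici, integral_Ici_eq_integral_Ioi,
      integral_Ioi_eq_half_integral_of_even hfi heven]
  simp_rw [twoPiece_eq_indicator_add hσ ha hb]
  rw [integral_add (((hfi.indicator measurableSet_Iio).comp_div (by positivity)).const_mul _)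
      (((hfi.indicator measurableSet_Ici).comp_div (by positivity)).const_mul _),
    integral_const_mul, integral_const_mul, hleft, hright]
  field_simp
  ring

lemma setIntegral_twoPiece_sub_le (hf : ∀ z, 0 ≤ f z) (hfi : Integrable f)
    (heven : ∀ z, f (-z) = f z) (hσ : 0 < σ) (ha : 0 < a) (hb : 0 < b) (A : Set ℝ) (c : ℝ) :
    ∫ t in A, twoPiece f σ a b (t - c) ≤ ∫ z, f z := by
  calc ∫ t in A, twoPiece f σ a b (t - c)
      ≤ ∫ t, twoPiece f σ a b (t - c) :=
        setIntegral_le_integral ((integrable_twoPiece hfi hσ ha hb).comp_sub_right c)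
          (Filter.Eventually.of_forall fun t => twoPiece_nonneg hf hσ.le ha.le hb.le _)
    _ = ∫ z, f z := by
        rw [integral_sub_right_eq_self (twoPiece f σ a b) c, integral_twoPiece hfi heven hσ ha hb]

end TwoPiece

theorem censored_posterior_proper_of_uncensored_posterior_proper_general
    (n p : ℕ) (q : ℝ)
    (X : Matrix (Fin n) (Fin p) ℝ)
    -- observed indices and observed values
    (O : Finset (Fin n)) (y : Fin n → ℝ)
    -- censoring sets for the censored indices
    (A : Fin n → Set ℝ)
    (Δ Γ : Set ℝ) (hΔ : MeasurableSet Δ) (hΓ : MeasurableSet Γ)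
    -- baseline densities f_δ : symmetric, strictly positive probability densities
    (f : ℝ → ℝ → ℝ)
    (hf_pos : ∀ δ ∈ Δ, ∀ z, 0 < f δ z)
    (hf_symm : ∀ δ ∈ Δ, ∀ z, f δ (-z) = f δ z)
    (hf_dens : ∀ δ ∈ Δ, ∫ z, f δ z = 1)
    -- parameterisation functions
    (a b : ℝ → ℝ)
    (ha_pos : ∀ γ ∈ Γ, 0 < a γ) (hb_pos : ∀ γ ∈ Γ, 0 < b γ)
    -- proper prior densities on Δ and Γ
    (πδ πγ : ℝ → ℝ)
    (hπδ_nonneg : ∀ δ, 0 ≤ πδ δ) (hπγ_nonneg : ∀ γ, 0 ≤ πγ γ)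
    -- hypothesis: the posterior based only on the uncensored observations is proper
    (ho : ∫⁻ γ in Γ, ∫⁻ δ in Δ, ∫⁻ σ in Set.Ioi (0 : ℝ), ∫⁻ β : Fin p → ℝ,
        ENNReal.ofReal ((∏ j ∈ O, twoPiece (f δ) σ (a γ) (b γ) (y j - ∑ i, X j i * β i)) *
          σ ^ (-q) * πδ δ * πγ γ) < ⊤) :
    -- conclusion: the censored-data posterior is proper
    ∫⁻ γ in Γ, ∫⁻ δ in Δ, ∫⁻ σ in Set.Ioi (0 : ℝ), ∫⁻ β : Fin p → ℝ,
        ENNReal.ofReal ((∏ j ∈ O, twoPiece (f δ) σ (a γ) (b γ) (y j - ∑ i, X j i * β i)) *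
          (∏ j ∈ Oᶜ, ∫ t in A j, twoPiece (f δ) σ (a γ) (b γ) (t - ∑ i, X j i * β i)) *
          σ ^ (-q) * πδ δ * πγ γ) < ⊤ := by
  -- Each censored factor is the mass of a probability density on a set, hence at most 1.
  refine lt_of_le_of_lt ?_ ho
  refine setLIntegral_mono' hΓ fun γ hγ => setLIntegral_mono' hΔ fun δ hδ =>
    setLIntegral_mono' measurableSet_Ioi fun σ (hσ : 0 < σ) => lintegral_mono fun β => ?_
  have hf_nonneg : ∀ z, 0 ≤ f δ z := fun z => (hf_pos δ hδ z).le
  have hf_int : Integrable (f δ) := Integrable.of_integral_ne_zero (by simp [hf_dens δ hδ])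
  have hdens_nonneg : ∀ c, 0 ≤ twoPiece (f δ) σ (a γ) (b γ) c :=
    twoPiece_nonneg hf_nonneg hσ.le (ha_pos γ hγ).le (hb_pos γ hγ).le
  have hcensored_le_one :
      ∏ j ∈ Oᶜ, ∫ t in A j, twoPiece (f δ) σ (a γ) (b γ) (t - ∑ i, X j i * β i) ≤ 1 :=
    Finset.prod_le_one (fun j _ => integral_nonneg fun t => hdens_nonneg _) fun j _ =>
      hf_dens δ hδ ▸ setIntegral_twoPiece_sub_le hf_nonneg hf_int (hf_symm δ hδ) hσ
        (ha_pos γ hγ) (hb_pos γ hγ) (A j) _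
  have hobserved_nonneg : 0 ≤ (∏ j ∈ O, twoPiece (f δ) σ (a γ) (b γ) (y j - ∑ i, X j i * β i)) *
      σ ^ (-q) * πδ δ * πγ γ := by
    have := Finset.prod_nonneg fun j (_ : j ∈ O) => hdens_nonneg (y j - ∑ i, X j i * β i)
    have := hπδ_nonneg δ
    have := hπγ_nonneg γ
    positivity
  refine ENNReal.ofReal_le_ofReal ?_
  calc _ = (∏ j ∈ Oᶜ, ∫ t in A j, twoPiece (f δ) σ (a γ) (b γ) (t - ∑ i, X j i * β i)) *
        ((∏ j ∈ O, twoPiece (f δ) σ (a γ) (b γ) (y j - ∑ i, X j i * β i)) *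
          σ ^ (-q) * πδ δ * πγ γ) := by ring
    _ ≤ _ := mul_le_of_le_one_left hobserved_nonneg hcensored_le_one

/-- Theorem 2 (censored observations): in the accelerated failure time model with
two-piece errors, if the posterior based only on the uncensored observations (indices in `O`)
is proper, then the censored-data posterior (where each censored index `j ∉ O` contributes the
factor `∫_{A_j} g(t - x_jᵀβ) dt`) is proper. -/
theorem censored_posterior_proper_of_uncensored_posterior_proper
    (n p : ℕ) (q : ℝ) (hq : 0 ≤ q)
    (X : Matrix (Fin n) (Fin p) ℝ)
    -- observed indices and observed values
    (O : Finset (Fin n)) (y : Fin n → ℝ)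
    -- censoring sets for the censored indices
    (A : Fin n → Set ℝ) (hA : ∀ j, MeasurableSet (A j))
    (Δ Γ : Set ℝ) (hΔ : MeasurableSet Δ) (hΓ : MeasurableSet Γ)
    -- baseline densities f_δ : symmetric, strictly positive probability densities
    (f : ℝ → ℝ → ℝ) (hf_meas : Measurable (Function.uncurry f))
    (hf_pos : ∀ δ ∈ Δ, ∀ z, 0 < f δ z)
    (hf_symm : ∀ δ ∈ Δ, ∀ z, f δ (-z) = f δ z)
    (hf_dens : ∀ δ ∈ Δ, ∫ z, f δ z = 1)
    -- parameterisation functions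
    (a b : ℝ → ℝ) (ha_meas : Measurable a) (hb_meas : Measurable b)
    (ha_pos : ∀ γ ∈ Γ, 0 < a γ) (hb_pos : ∀ γ ∈ Γ, 0 < b γ)
    -- proper prior densities on Δ and Γ
    (πδ πγ : ℝ → ℝ) (hπδ_meas : Measurable πδ) (hπγ_meas : Measurable πγ)
    (hπδ_nonneg : ∀ δ, 0 ≤ πδ δ) (hπγ_nonneg : ∀ γ, 0 ≤ πγ γ)
    (hπδ_proper : ∫⁻ δ in Δ, ENNReal.ofReal (πδ δ) = 1)
    (hπγ_proper : ∫⁻ γ in Γ, ENNReal.ofReal (πγ γ) = 1)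
    -- hypothesis: the posterior based only on the uncensored observations is proper
    (ho : ∫⁻ γ in Γ, ∫⁻ δ in Δ, ∫⁻ σ in Set.Ioi (0 : ℝ), ∫⁻ β : Fin p → ℝ,
        ENNReal.ofReal ((∏ j ∈ O, twoPiece (f δ) σ (a γ) (b γ) (y j - ∑ i, X j i * β i)) *
          σ ^ (-q) * πδ δ * πγ γ) < ⊤) :
    -- conclusion: the censored-data posterior is proper
    ∫⁻ γ in Γ, ∫⁻ δ in Δ, ∫⁻ σ in Set.Ioi (0 : ℝ), ∫⁻ β : Fin p → ℝ,
        ENNReal.ofReal ((∏ j ∈ O, twoPiece (f δ) σ (a γ) (b γ) (y j - ∑ i, X j i * β i)) *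
          (∏ j ∈ Oᶜ, ∫ t in A j, twoPiece (f δ) σ (a γ) (b γ) (t - ∑ i, X j i * β i)) *
          σ ^ (-q) * πδ δ * πγ γ) < ⊤ :=
  censored_posterior_proper_of_uncensored_posterior_proper_general n p q X O y A Δ Γ hΔ hΓ f hf_pos
    hf_symm hf_dens a b ha_pos hb_pos πδ πγ hπδ_nonneg hπγ_nonneg ho
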